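/- Let f = Σ_{r=0}^n x_r^{d_1} g_r be a CW-Nagata polynomial of bidegree (d_1,d_2). For every i with 1 ≤ i ≤ d_1, the classes of X_0^i, X_1^i, …, X_n^i form a K-basis of A_{(i,0)}; in particular dim_K A_{(i,0)} = n+1. -/

import Mathlib

/-!
A monomial `X^a` of bidegree `(i, 0)` contracts the term `x_r^{d₁} g_r` of `f` to something
nonzero only if `a ≤ d₁ e_r + g_r`, i.e. only if `X^a = X_r^i`. Hence every other monomial of
bidegree `(i, 0)` lies in `Ann(f)`, and the classes of the `X_r^i` span `A_(i,0)`. They are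
linearly independent because the contractions `X_r^i ∘ f = x_r^{d₁-i} g_r` are pairwise distinct
monomials, the `g_r` being distinct.
-/

open MvPolynomial

namespace CW

variable {σ K : Type*} [CommSemiring K]

/-- A generic "monomial contraction-type" action of the polynomial ring on itself,
determined by a structure coefficient `ν c a` (the coefficient produced when the
operator monomial with exponent `a` acts on the monomial with exponent `c`). -/
noncomputable def genAct (ν : (σ →₀ ℕ) → (σ →₀ ℕ) → K) (α f : MvPolynomial σ K) :
    MvPolynomial σ K :=
  Finsupp.sum (AddMonoidAlgebra.coeff α) fun a ca =>
    Finsupp.sum (AddMonoidAlgebra.coeff f) fun c cf => monomial (c - a) (ν c a * (ca * cf))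

theorem genAct_zero_left (ν : (σ →₀ ℕ) → (σ →₀ ℕ) → K) (f : MvPolynomial σ K) :
    genAct ν 0 f = 0 :=
  Finsupp.sum_zero_index

theorem genAct_zero_right (ν : (σ →₀ ℕ) → (σ →₀ ℕ) → K) (α : MvPolynomial σ K) :
    genAct ν α 0 = 0 := by
  unfold genAct
  simp only [AddMonoidAlgebra.coeff_zero, Finsupp.sum_zero_index, Finsupp.sum,
    Finsupp.support_zero, Finset.sum_empty, Finset.sum_const_zero]

theorem genAct_add_left (ν : (σ →₀ ℕ) → (σ →₀ ℕ) → K) (α β f : MvPolynomial σ K) :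
    genAct ν (α + β) f = genAct ν α f + genAct ν β f := by
  unfold genAct
  apply Finsupp.sum_add_index'
  · intro a
    simp only [mul_zero, zero_mul, map_zero, Finsupp.sum, Finset.sum_const_zero]
  · intro a b₁ b₂
    rw [← Finsupp.sum_add]
    apply Finsupp.sum_congr
    intro c _
    rw [add_mul, mul_add, map_add]

theorem genAct_add_right (ν : (σ →₀ ℕ) → (σ →₀ ℕ) → K) (α f g : MvPolynomial σ K) :
    genAct ν α (f + g) = genAct ν α f + genAct ν α g := by
  unfold genAct
  rw [← Finsupp.sum_add]
  apply Finsupp.sum_congr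
  intro a _
  apply Finsupp.sum_add_index'
  · intro c
    simp only [mul_zero, map_zero]
  · intro c c₁ c₂
    rw [mul_add, mul_add, map_add]

theorem genAct_monomial (ν : (σ →₀ ℕ) → (σ →₀ ℕ) → K) (a c : σ →₀ ℕ) (r s : K) :
    genAct ν (monomial a r) (monomial c s) = monomial (c - a) (ν c a * (r * s)) := by
  unfold genAct
  rw [← single_eq_monomial a r, ← single_eq_monomial c s, AddMonoidAlgebra.coeff_single,
    AddMonoidAlgebra.coeff_single]
  rw [Finsupp.sum_single_index, Finsupp.sum_single_index]
  · simp only [mul_zero, map_zero]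
  · simp only [mul_zero, zero_mul, map_zero, Finsupp.sum, Finset.sum_const_zero]

theorem genAct_mul {ν : (σ →₀ ℕ) → (σ →₀ ℕ) → K}
    (hν : ∀ c a b, ν c (a + b) = ν c b * ν (c - b) a) (α β f : MvPolynomial σ K) :
    genAct ν (α * β) f = genAct ν α (genAct ν β f) := by
  induction α using MvPolynomial.induction_on' with
  | add p q hp hq => rw [add_mul, genAct_add_left, hp, hq, genAct_add_left]
  | monomial a r =>
    induction β using MvPolynomial.induction_on' with
    | add p q hp hq =>
      rw [mul_add, genAct_add_left, hp, hq, ← genAct_add_right, genAct_add_left]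
    | monomial b s =>
      induction f using MvPolynomial.induction_on' with
      | add p q hp hq =>
        rw [genAct_add_right, hp, hq, ← genAct_add_right, ← genAct_add_right]
      | monomial c t =>
        rw [monomial_mul, genAct_monomial, genAct_monomial, genAct_monomial,
          show c - (a + b) = c - b - a from by rw [tsub_tsub, add_comm], hν]
        congr 1
        ring

/-- The annihilator ideal of `f` under the action `genAct ν`. -/
noncomputable def annG (ν : (σ →₀ ℕ) → (σ →₀ ℕ) → K)
    (hν : ∀ c a b, ν c (a + b) = ν c b * ν (c - b) a) (f : MvPolynomial σ K) :
    Ideal (MvPolynomial σ K) where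
  carrier := {α | genAct ν α f = 0}
  zero_mem' := genAct_zero_left ν f
  add_mem' := by
    intro a b ha hb
    show genAct ν (a + b) f = 0
    rw [genAct_add_left, ha, hb, add_zero]
  smul_mem' := by
    intro c α hα
    show genAct ν (c * α) f = 0
    rw [genAct_mul hν, hα, genAct_zero_right]

/-- Structure coefficient of the contraction (apolarity) action: `X^a` sends `x^c`
to `x^(c-a)` if `a ≤ c` and to `0` otherwise. -/
noncomputable def cnu (c a : σ →₀ ℕ) : K :=
  open scoped Classical in if a ≤ c then 1 else 0

theorem cnu_mul (c a b : σ →₀ ℕ) :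
    (cnu c (a + b) : K) = cnu c b * cnu (c - b) a := by
  classical
  unfold cnu
  by_cases hb : b ≤ c
  · by_cases ha : a ≤ c - b
    · have h : a + b ≤ c := (le_tsub_iff_right hb).mp ha
      simp [hb, ha, h]
    · have h : ¬ a + b ≤ c := fun h => ha ((le_tsub_iff_right hb).mpr h)
      simp [hb, ha, h]
  · have h : ¬ a + b ≤ c := fun h => hb (le_trans le_add_self h)
    simp [hb, h]

/-- The contraction action `α ∘ f`. -/
noncomputable def cAct (α f : MvPolynomial σ K) : MvPolynomial σ K :=
  genAct cnu α f

/-- The annihilator `Ann(f)` of `f` under the contraction action, as an ideal. -/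
noncomputable def cAnn (f : MvPolynomial σ K) : Ideal (MvPolynomial σ K) :=
  annG cnu cnu_mul f

theorem mem_cAnn {f α : MvPolynomial σ K} : α ∈ cAnn f ↔ cAct α f = 0 := Iff.rfl

/-- The `K`-submodule of polynomials all of whose monomials satisfy `P`. -/
noncomputable def bihom (K : Type*) [CommSemiring K] {σ : Type*} (P : (σ →₀ ℕ) → Prop) :
    Submodule K (MvPolynomial σ K) where
  carrier := {p | ∀ c ∈ p.support, P c}
  zero_mem' := by
    intro c hc
    simp at hc
  add_mem' := by
    classical
    intro p q hp hq c hc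
    rcases Finset.mem_union.mp (MvPolynomial.support_add hc) with h | h
    · exact hp c h
    · exact hq c h
  smul_mem' := by
    intro k p hp c hc
    exact hp c (MvPolynomial.support_smul hc)

/-- The x-degree of an exponent vector. -/
def degX {n m : ℕ} (c : (Fin (n + 1) ⊕ Fin m) →₀ ℕ) : ℕ := ∑ r, c (Sum.inl r)

/-- The u-degree of an exponent vector. -/
def degU {n m : ℕ} (c : (Fin (n + 1) ⊕ Fin m) →₀ ℕ) : ℕ := ∑ k, c (Sum.inr k)

/-- The bihomogeneous component `T_(i,j)`. -/
noncomputable def Tbi (K : Type*) [CommSemiring K] {n m : ℕ} (i j : ℕ) :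
    Submodule K (MvPolynomial (Fin (n + 1) ⊕ Fin m) K) :=
  bihom K fun c => degX c = i ∧ degU c = j

/-- The bigraded component `A_(i,j)` of `A = T ⧸ Ann(f)`: the image of `T_(i,j)`
in the quotient. -/
noncomputable def Abi {K : Type*} [Field K] {n m : ℕ}
    (f : MvPolynomial (Fin (n + 1) ⊕ Fin m) K) (i j : ℕ) :
    Submodule K (MvPolynomial (Fin (n + 1) ⊕ Fin m) K ⧸ cAnn f) :=
  (Tbi K i j).map (Ideal.Quotient.mkₐ K (cAnn f)).toLinearMap

theorem _root_.LinearIndependent.comp_of_ker_le {ι R M N N' : Type*} [Ring R] [AddCommGroup M]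
    [AddCommGroup N] [AddCommGroup N'] [Module R M] [Module R N] [Module R N']
    {φ : M →ₗ[R] N} {ψ : M →ₗ[R] N'} (hker : LinearMap.ker φ ≤ LinearMap.ker ψ) {v : ι → M}
    (hv : LinearIndependent R (ψ ∘ v)) : LinearIndependent R (φ ∘ v) := by
  rw [linearIndependent_iff'] at hv ⊢
  intro s c hc
  apply hv s c
  have hmem : ∑ i ∈ s, c i • v i ∈ LinearMap.ker φ := by
    simpa only [LinearMap.mem_ker, map_sum, map_smul, Function.comp_apply] using hc
  simpa only [LinearMap.mem_ker, map_sum, map_smul, Function.comp_apply] using hker hmem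

theorem _root_.Submodule.exists_basis_of_le_span {ι R M : Type*} [Ring R] [AddCommGroup M]
    [Module R M] {W : Submodule R M} {v : ι → M} (hli : LinearIndependent R v)
    (hv : ∀ i, v i ∈ W) (hW : W ≤ Submodule.span R (Set.range v)) :
    ∃ b : Module.Basis ι R W, ∀ i, (b i : M) = v i := by
  have heq : Submodule.span R (Set.range v) = W :=
    le_antisymm (Submodule.span_le.mpr (Set.range_subset_iff.mpr hv)) hW
  exact ⟨(Module.Basis.span hli).map (LinearEquiv.ofEq _ _ heq),
    fun i => by simp [Module.Basis.span_apply]⟩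

theorem cAct_monomial (a c : σ →₀ ℕ) (r s : K) :
    cAct (monomial a r) (monomial c s) = if a ≤ c then monomial (c - a) (r * s) else 0 := by
  rw [cAct, genAct_monomial, cnu]
  split_ifs <;> simp_all

theorem cAct_sum_right {ι : Type*} (α : MvPolynomial σ K) (s : Finset ι)
    (h : ι → MvPolynomial σ K) : cAct α (∑ i ∈ s, h i) = ∑ i ∈ s, cAct α (h i) :=
  map_sum (AddMonoidHom.mk ⟨cAct α, genAct_zero_right cnu α⟩ (genAct_add_right cnu α)) h s

theorem cAct_C (k : K) (p : MvPolynomial σ K) : cAct (C k) p = k • p := by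
  induction p using MvPolynomial.induction_on' with
  | monomial c s => rw [C_apply, cAct_monomial, if_pos zero_le, tsub_zero, smul_monomial,
      smul_eq_mul]
  | add p q hp hq => rw [cAct, genAct_add_right, ← cAct, ← cAct, hp, hq, smul_add]

noncomputable def cActLeft (f : MvPolynomial σ K) :
    MvPolynomial σ K →ₗ[K] MvPolynomial σ K where
  toFun α := cAct α f
  map_add' α β := genAct_add_left cnu α β f
  map_smul' k α := by
    rw [smul_eq_C_mul, cAct, genAct_mul cnu_mul, ← cAct, cAct_C, RingHom.id_apply]
    rfl

theorem cActLeft_apply (f α : MvPolynomial σ K) :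
    cActLeft f α = cAct α f := rfl

theorem ker_mkₐ_cAnn {K : Type*} [CommRing K] (f : MvPolynomial σ K) :
    LinearMap.ker (Ideal.Quotient.mkₐ K (cAnn f)).toLinearMap = LinearMap.ker (cActLeft f) := by
  ext α
  simp only [LinearMap.mem_ker, AlgHom.toLinearMap_apply, Ideal.Quotient.mkₐ_eq_mk,
    Ideal.Quotient.eq_zero_iff_mem, mem_cAnn, cActLeft_apply]

theorem bihom_eq_restrictSupport (P : (σ →₀ ℕ) → Prop) :
    bihom K P = restrictSupport K {c | P c} :=
  rfl

section Nagata

variable {n m : ℕ}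

theorem degX_single_inl (r : Fin (n + 1)) (i : ℕ) :
    degX (Finsupp.single (Sum.inl r) i : (Fin (n + 1) ⊕ Fin m) →₀ ℕ) = i := by
  simp [degX, Finsupp.single_apply]

theorem degU_single_inl (r : Fin (n + 1)) (i : ℕ) :
    degU (Finsupp.single (Sum.inl r) i : (Fin (n + 1) ⊕ Fin m) →₀ ℕ) = 0 := by
  simp [degU]

theorem X_inl_pow_mem_Tbi (r : Fin (n + 1)) (i : ℕ) :
    (X (Sum.inl r) ^ i : MvPolynomial (Fin (n + 1) ⊕ Fin m) K) ∈ Tbi K i 0 := by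
  rw [Tbi, bihom_eq_restrictSupport, X_pow_eq_monomial, monomial_mem_restrictSupport]
  exact Or.inl ⟨degX_single_inl r i, degU_single_inl r i⟩

theorem mk_X_inl_pow_mem_Abi {K : Type*} [Field K] (f : MvPolynomial (Fin (n + 1) ⊕ Fin m) K)
    (r : Fin (n + 1)) (i : ℕ) : Ideal.Quotient.mk (cAnn f) (X (Sum.inl r) ^ i) ∈ Abi f i 0 :=
  Submodule.mem_map_of_mem (X_inl_pow_mem_Tbi r i)

/-- The exponent vector of `x_r^{d₁} g_r`. -/
noncomputable def nagataExponent (d₁ : ℕ) (g : Fin (n + 1) → (Fin m →₀ ℕ)) (r : Fin (n + 1)) :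
    (Fin (n + 1) ⊕ Fin m) →₀ ℕ :=
  Finsupp.single (Sum.inl r) d₁ + (g r).mapDomain Sum.inr

/-- The CW-Nagata polynomial `∑ r, x_r^{d₁} g_r`. -/
noncomputable def nagata (K : Type*) [CommSemiring K] (d₁ : ℕ)
    (g : Fin (n + 1) → (Fin m →₀ ℕ)) : MvPolynomial (Fin (n + 1) ⊕ Fin m) K :=
  ∑ r, monomial (nagataExponent d₁ g r) 1

theorem sum_X_pow_mul_monomial_eq_nagata (d₁ : ℕ) (g : Fin (n + 1) → (Fin m →₀ ℕ)) :
    ∑ r, X (Sum.inl r) ^ d₁ * monomial ((g r).mapDomain Sum.inr) (1 : K) = nagata K d₁ g := by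
  refine Finset.sum_congr rfl fun r _ => ?_
  rw [X_pow_eq_monomial, monomial_mul, one_mul, nagataExponent]

theorem nagataExponent_inl (d₁ : ℕ) (g : Fin (n + 1) → (Fin m →₀ ℕ)) (r t : Fin (n + 1)) :
    nagataExponent d₁ g r (Sum.inl t) = Finsupp.single r d₁ t := by
  rw [nagataExponent, Finsupp.add_apply, Finsupp.mapDomain_of_notMem_range _ _ (by simp),
    Finsupp.single_apply, Finsupp.single_apply, add_zero]
  simp

theorem nagataExponent_inr (d₁ : ℕ) (g : Fin (n + 1) → (Fin m →₀ ℕ)) (r : Fin (n + 1))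
    (k : Fin m) : nagataExponent d₁ g r (Sum.inr k) = g r k := by
  rw [nagataExponent, Finsupp.add_apply, Finsupp.mapDomain_apply Sum.inr_injective,
    Finsupp.single_apply, if_neg Sum.inl_ne_inr, zero_add]

theorem eq_single_of_le_nagataExponent {d₁ : ℕ} {g : Fin (n + 1) → (Fin m →₀ ℕ)}
    {r : Fin (n + 1)} {a : (Fin (n + 1) ⊕ Fin m) →₀ ℕ} (hle : a ≤ nagataExponent d₁ g r)
    (ha : degU a = 0) : a = Finsupp.single (Sum.inl r) (degX a) := by
  have hU : ∀ k, a (Sum.inr k) = 0 := fun k =>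
    Finset.sum_eq_zero_iff.mp ha k (Finset.mem_univ k)
  have hX : ∀ t ≠ r, a (Sum.inl t) = 0 := fun t ht => by
    simpa [nagataExponent_inl, Finsupp.single_apply, Ne.symm ht] using hle (Sum.inl t)
  have hdeg : degX a = a (Sum.inl r) :=
    Finset.sum_eq_single r (fun t _ ht => hX t ht) (by simp)
  ext (t | k)
  · obtain rfl | ht := eq_or_ne t r
    · simp [hdeg]
    · simp [hX t ht, Ne.symm ht]
  · simp [hU k]

theorem single_le_nagataExponent {i d₁ : ℕ} (hid : i ≤ d₁) (g : Fin (n + 1) → (Fin m →₀ ℕ))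
    (r : Fin (n + 1)) : Finsupp.single (Sum.inl r) i ≤ nagataExponent d₁ g r :=
  (Finsupp.single_le_single.mpr hid).trans le_self_add

theorem nagataExponent_sub_single_injective {g : Fin (n + 1) → (Fin m →₀ ℕ)}
    (hg : Function.Injective g) (d₁ i : ℕ) :
    Function.Injective fun r => nagataExponent d₁ g r - Finsupp.single (Sum.inl r) i := by
  intro r s h
  apply hg
  ext k
  simpa [nagataExponent_inr] using DFunLike.congr_fun h (Sum.inr k)

theorem cAct_monomial_nagata (d₁ : ℕ) (g : Fin (n + 1) → (Fin m →₀ ℕ))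
    (a : (Fin (n + 1) ⊕ Fin m) →₀ ℕ) (k : K) :
    cAct (monomial a k) (nagata K d₁ g) = ∑ r,
      if a ≤ nagataExponent d₁ g r then monomial (nagataExponent d₁ g r - a) k else 0 := by
  simp only [nagata, cAct_sum_right, cAct_monomial, mul_one]

theorem monomial_mem_cAnn_nagata (d₁ : ℕ) (g : Fin (n + 1) → (Fin m →₀ ℕ))
    {c : (Fin (n + 1) ⊕ Fin m) →₀ ℕ} (hU : degU c = 0)
    (hc : ∀ r, c ≠ Finsupp.single (Sum.inl r) (degX c)) (k : K) :
    monomial c k ∈ cAnn (nagata K d₁ g) := by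
  rw [mem_cAnn, cAct_monomial_nagata]
  exact Finset.sum_eq_zero fun r _ =>
    if_neg fun hle => hc r (eq_single_of_le_nagataExponent hle hU)

theorem cAct_X_pow_nagata {i d₁ : ℕ} (hi : i ≠ 0) (hid : i ≤ d₁)
    (g : Fin (n + 1) → (Fin m →₀ ℕ)) (r : Fin (n + 1)) :
    cAct (X (Sum.inl r) ^ i) (nagata K d₁ g) =
      monomial (nagataExponent d₁ g r - Finsupp.single (Sum.inl r) i) 1 := by
  rw [X_pow_eq_monomial, cAct_monomial_nagata, Finset.sum_eq_single r]
  · rw [if_pos (single_le_nagataExponent hid g r)]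
  · intro s _ hsr
    refine if_neg fun hle => hsr ?_
    have h := eq_single_of_le_nagataExponent hle (degU_single_inl r i)
    rw [degX_single_inl, Finsupp.single_left_inj hi] at h
    exact (Sum.inl_injective h).symm
  · simp

theorem linearIndependent_mk_X_pow_nagata {K : Type*} [CommRing K] {d₁ i : ℕ}
    {g : Fin (n + 1) → (Fin m →₀ ℕ)} (hg : Function.Injective g) (hi : i ≠ 0) (hid : i ≤ d₁) :
    LinearIndependent K fun r => Ideal.Quotient.mk (cAnn (nagata K d₁ g)) (X (Sum.inl r) ^ i) := by
  have hcontr : LinearIndependent K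
      (cActLeft (nagata K d₁ g) ∘ fun r => (X (Sum.inl r) ^ i : MvPolynomial _ K)) := by
    have hmon : (cActLeft (nagata K d₁ g) ∘ fun r => (X (Sum.inl r) ^ i : MvPolynomial _ K)) =
        basisMonomials _ K ∘ fun r => nagataExponent d₁ g r - Finsupp.single (Sum.inl r) i := by
      funext r
      simp only [Function.comp_apply, cActLeft_apply, cAct_X_pow_nagata hi hid,
        coe_basisMonomials]
    rw [hmon]
    exact (basisMonomials _ K).linearIndependent.comp _
      (nagataExponent_sub_single_injective hg d₁ i)
  exact hcontr.comp_of_ker_le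
    (φ := (Ideal.Quotient.mkₐ K (cAnn (nagata K d₁ g))).toLinearMap) (ker_mkₐ_cAnn _).le

theorem Abi_nagata_le_span {K : Type*} [Field K] (d₁ : ℕ) (g : Fin (n + 1) → (Fin m →₀ ℕ))
    (i : ℕ) :
    Abi (nagata K d₁ g) i 0 ≤ Submodule.span K
      (Set.range fun r => Ideal.Quotient.mk (cAnn (nagata K d₁ g)) (X (Sum.inl r) ^ i)) := by
  rw [Abi, Tbi, bihom_eq_restrictSupport, restrictSupport_eq_span, Submodule.map_span,
    Submodule.span_le]
  rintro _ ⟨_, ⟨c, ⟨hX, hU⟩, rfl⟩, rfl⟩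
  by_cases hc : ∃ r, c = Finsupp.single (Sum.inl r) (degX c)
  · obtain ⟨r, hr⟩ := hc
    refine Submodule.subset_span ⟨r, ?_⟩
    simp only [AlgHom.toLinearMap_apply, Ideal.Quotient.mkₐ_eq_mk, X_pow_eq_monomial]
    rw [hr, hX]
  · push Not at hc
    rw [AlgHom.toLinearMap_apply, Ideal.Quotient.mkₐ_eq_mk,
      Ideal.Quotient.eq_zero_iff_mem.mpr (monomial_mem_cAnn_nagata d₁ g hU hc 1)]
    exact Submodule.zero_mem _

end Nagata

theorem stmt_2_general {K : Type*} [Field K] (n m d₁ : ℕ)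
    (g : Fin (n + 1) → (Fin m →₀ ℕ))
    (hginj : Function.Injective g)
    (f : MvPolynomial (Fin (n + 1) ⊕ Fin m) K)
    (hf : f = ∑ r, MvPolynomial.X (Sum.inl r) ^ d₁ *
      MvPolynomial.monomial ((g r).mapDomain Sum.inr) 1)
    (i : ℕ) (hi : 1 ≤ i) (hid : i ≤ d₁) :
    (∃ b : Module.Basis (Fin (n + 1)) K (Abi f i 0),
      ∀ r, (b r : MvPolynomial (Fin (n + 1) ⊕ Fin m) K ⧸ cAnn f) =
        Ideal.Quotient.mk (cAnn f) (MvPolynomial.X (Sum.inl r) ^ i)) ∧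
    Module.finrank K (Abi f i 0) = n + 1 := by
  rw [sum_X_pow_mul_monomial_eq_nagata] at hf
  subst hf
  obtain ⟨b, hb⟩ := Submodule.exists_basis_of_le_span
    (linearIndependent_mk_X_pow_nagata (K := K) hginj (by omega) hid)
    (fun r => mk_X_inl_pow_mem_Abi _ r i) (Abi_nagata_le_span d₁ g i)
  exact ⟨⟨b, hb⟩, by rw [Module.finrank_eq_card_basis b, Fintype.card_fin]⟩

theorem stmt_2 {K : Type*} [Field K] [CharZero K] (n m d₁ d₂ : ℕ)
    (hd₁ : 1 ≤ d₁) (hd₂ : 2 ≤ d₂)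
    (g : Fin (n + 1) → (Fin m →₀ ℕ))
    (hgdeg : ∀ r, (∑ k, g r k) = d₂)
    (hginj : Function.Injective g)
    (f : MvPolynomial (Fin (n + 1) ⊕ Fin m) K)
    (hf : f = ∑ r, MvPolynomial.X (Sum.inl r) ^ d₁ *
      MvPolynomial.monomial ((g r).mapDomain Sum.inr) 1)
    (i : ℕ) (hi : 1 ≤ i) (hid : i ≤ d₁) :
    (∃ b : Module.Basis (Fin (n + 1)) K (Abi f i 0),
      ∀ r, (b r : MvPolynomial (Fin (n + 1) ⊕ Fin m) K ⧸ cAnn f) =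
        Ideal.Quotient.mk (cAnn f) (MvPolynomial.X (Sum.inl r) ^ i)) ∧
    Module.finrank K (Abi f i 0) = n + 1 :=
  stmt_2_general n m d₁ g hginj f hf i hi hid

end CW
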